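/- arXiv:2006.09166 — 2 statements merged into one kernel-verified Lean document; each statement's English description precedes it below -/
import Mathlib

section
/- Every infinite, locally finite, connected, claw-free graph that contains a cycle also contains an induced subgraph isomorphic to the paw. -/
open SimpleGraph

/-- The claw `K_{1,3}`: vertex `0` is the centre, adjacent to `1`, `2`, `3`. -/
def claw : SimpleGraph (Fin 4) := SimpleGraph.fromRel (fun a _ => a = 0)

/-- The paw: a triangle on `1, 2, 3` with pendant vertex `0` attached to `1`. -/
def paw : SimpleGraph (Fin 4) :=
  SimpleGraph.fromRel (fun a b => (a = 0 ∧ b = 1) ∨ (a ≠ 0 ∧ b ≠ 0))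

/-- `G` is `H`-free: no induced subgraph of `G` is isomorphic to `H`.
(`H ↪g G` is a graph embedding, i.e. an isomorphism onto an induced subgraph.) -/
def HFree {W V : Type*} (H : SimpleGraph W) (G : SimpleGraph V) : Prop :=
  ¬ Nonempty (H ↪g G)

/-- `G` is 2-connected: at least 3 vertices, connected, and deleting any vertex
leaves it connected. -/
def TwoConnected {V : Type*} (G : SimpleGraph V) : Prop :=
  (∃ a b c : V, a ≠ b ∧ a ≠ c ∧ b ≠ c) ∧ G.Connected ∧
    ∀ v : V, (G.induce {u | u ≠ v}).Connected

/-- The hypothesis that every induced paw of `G`, with pendant vertex `a₁` adjacent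
precisely to the triangle vertex `a₀`, satisfies `φ(a₁,b₁)` or `φ(a₁,b₂)`:
`a₁` has a common neighbour outside the paw with `b₁` or with `b₂`. -/
def PawCondition {V : Type*} (G : SimpleGraph V) : Prop :=
  ∀ a₁ a₀ b₁ b₂ : V,
    G.Adj a₁ a₀ → G.Adj a₀ b₁ → G.Adj a₀ b₂ → G.Adj b₁ b₂ →
    ¬ G.Adj a₁ b₁ → ¬ G.Adj a₁ b₂ → a₁ ≠ b₁ → a₁ ≠ b₂ →
    ∃ x, x ∉ ({a₁, a₀, b₁, b₂} : Set V) ∧ G.Adj x a₁ ∧ (G.Adj x b₁ ∨ G.Adj x b₂)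

/-- A ray (one-way infinite path) in `G`, given by its sequence of vertices. -/
def IsRay {V : Type*} (G : SimpleGraph V) (f : ℕ → V) : Prop :=
  Function.Injective f ∧ ∀ n, G.Adj (f n) (f (n + 1))

/-- Two rays are equivalent (belong to the same end) if no finite vertex set
separates them. -/
def EndEquiv {V : Type*} (G : SimpleGraph V) (f g : ℕ → V) : Prop :=
  ∀ S : Set V, S.Finite →
    ∃ (m n : ℕ) (p : G.Walk (f m) (g n)), ∀ x ∈ p.support, x ∉ S

/-- The ends of `G`, as equivalence classes of rays. -/
def Ends {V : Type*} (G : SimpleGraph V) : Type _ :=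
  Quot (fun f g : {f : ℕ → V // IsRay G f} => EndEquiv G f.1 g.1)

/-- The edge cut `δ(X)`. -/
def edgeCut {V : Type*} (G : SimpleGraph V) (X : Set V) : Set (Sym2 V) :=
  {e | e ∈ G.edgeSet ∧ ∃ a b, e = s(a, b) ∧ a ∈ X ∧ b ∉ X}

/-- `G` has a Hamilton circle in its Freudenthal compactification `|G|`,
expressed combinatorially: there is a spanning edge set `C` in which every
vertex has degree exactly `2` and which meets every finite cut of `G` in a
positive even number of edges (for locally finite connected `G` this
characterises edge sets whose closure in `|G|` is a circle through all
vertices). -/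
def HasHamiltonCircle {V : Type*} (G : SimpleGraph V) : Prop :=
  ∃ C ⊆ G.edgeSet, (∀ v : V, {e ∈ C | v ∈ e}.ncard = 2) ∧
    ∀ X : Set V, X.Nonempty → Xᶜ.Nonempty → (edgeCut G X).Finite →
      (C ∩ edgeCut G X).Nonempty ∧ Even ((C ∩ edgeCut G X).ncard)

/-- The end represented by the ray `g` lies in the closure (in `|G|`) of the
vertex set `M`: for every finite `S`, the component of `G - S` containing a
tail of `g` meets `M`. -/
def EndInClosure {V : Type*} (G : SimpleGraph V) (g : ℕ → V) (M : Set V) : Prop :=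
  ∀ S : Set V, S.Finite → ∃ u ∈ M, ∃ N : ℕ, ∀ n ≥ N,
    ∃ p : G.Walk u (g n), ∀ x ∈ p.support, x ∉ S

/-- `S` is a vertex separator of `G`: `G - S` is disconnected. -/
def IsSeparator {V : Type*} (G : SimpleGraph V) (S : Set V) : Prop :=
  ∃ (u : V) (hu : u ∉ S) (v : V) (hv : v ∉ S),
    ¬ (G.induce {x | x ∉ S}).Reachable ⟨u, hu⟩ ⟨v, hv⟩

/-- `S` is a minimal vertex separator of `G`. -/
def IsMinSeparator {V : Type*} (G : SimpleGraph V) (S : Set V) : Prop :=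
  IsSeparator G S ∧ ∀ T ⊂ S, ¬ IsSeparator G T

/-- The `k`-blow-up of `G`: each vertex is replaced by a `k`-clique. -/
def blowup {V : Type*} (G : SimpleGraph V) (k : ℕ) : SimpleGraph (V × Fin k) where
  Adj x y := (x.1 = y.1 ∧ x.2 ≠ y.2) ∨ G.Adj x.1 y.1
  symm := by
    refine ⟨?_⟩
    rintro x y (⟨h1, h2⟩ | h)
    · exact Or.inl ⟨h1.symm, h2.symm⟩
    · exact Or.inr h.symm
  loopless := by
    refine ⟨?_⟩
    rintro x (⟨_, h⟩ | h)
    · exact h rfl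
    · exact G.irrefl h

/-!
Without triangles, claw-freeness leaves every vertex at most two neighbours, so the vertex set of
a cycle is closed under adjacency. With a triangle `abc` but no induced paw, a vertex adjacent to
one corner of a triangle is adjacent to a second corner, which makes the closed neighbourhood of
`{a, b, c}` closed under adjacency; it is finite by local finiteness. In both cases connectedness
turns the finite closed set into all of `V`.
-/

namespace SimpleGraph

variable {V : Type*} {G : SimpleGraph V}

lemma nonempty_paw_embedding {p a b c : V} (hab : G.Adj a b) (hac : G.Adj a c)
    (hbc : G.Adj b c) (hpa : G.Adj p a) (hpb : ¬G.Adj p b) (hpc : ¬G.Adj p c)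
    (hpb' : p ≠ b) (hpc' : p ≠ c) : Nonempty (paw ↪g G) := by
  have hpa' := hpa.ne
  refine ⟨⟨⟨![p, a, b, c], fun i j hij => ?_⟩, fun {i j} => ?_⟩⟩
  · fin_cases i <;> fin_cases j <;> simp_all [hab.ne, hac.ne, hbc.ne, hab.ne', hac.ne', hbc.ne']
  · change G.Adj (![p, a, b, c] i) (![p, a, b, c] j) ↔ paw.Adj i j
    fin_cases i <;> fin_cases j <;>
      simp [paw, hab, hac, hbc, hpa, hpb, hpc, hab.symm, hac.symm, hbc.symm, hpa.symm,
        G.adj_comm b p, G.adj_comm c p]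

lemma nonempty_claw_embedding {u x y z : V} (hx : G.Adj u x) (hy : G.Adj u y) (hz : G.Adj u z)
    (hxy : ¬G.Adj x y) (hxz : ¬G.Adj x z) (hyz : ¬G.Adj y z)
    (hxy' : x ≠ y) (hxz' : x ≠ z) (hyz' : y ≠ z) : Nonempty (claw ↪g G) := by
  refine ⟨⟨⟨![u, x, y, z], fun i j hij => ?_⟩, fun {i j} => ?_⟩⟩
  · fin_cases i <;> fin_cases j <;> simp_all [hx.ne, hy.ne, hz.ne, hx.ne', hy.ne', hz.ne']
  · change G.Adj (![u, x, y, z] i) (![u, x, y, z] j) ↔ claw.Adj i j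
    fin_cases i <;> fin_cases j <;>
      simp [claw, hx, hy, hz, hxy, hxz, hyz, hx.symm, hy.symm, hz.symm,
        G.adj_comm y x, G.adj_comm z x, G.adj_comm z y]

lemma adj_or_adj_of_pawFree (hpaw : HFree paw G) {x u v w : V} (huv : G.Adj u v)
    (huw : G.Adj u w) (hvw : G.Adj v w) (hxu : G.Adj x u) (hxv : x ≠ v) (hxw : x ≠ w) :
    G.Adj x v ∨ G.Adj x w := by
  by_contra! h
  exact hpaw (nonempty_paw_embedding huv huw hvw hxu h.1 h.2 hxv hxw)

lemma mem_closedNbhd_or_mem_closedNbhd_of_pawFree (hpaw : HFree paw G) {x u v d : V}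
    (hxu : G.Adj x u) (hxv : G.Adj x v) (huv : G.Adj u v) (hxd : G.Adj x d) :
    d ∈ insert u (G.neighborSet u) ∨ d ∈ insert v (G.neighborSet v) := by
  by_cases hdu : d = u
  · exact .inl (.inl hdu)
  by_cases hdv : d = v
  · exact .inr (.inl hdv)
  rcases adj_or_adj_of_pawFree hpaw hxu hxv huv hxd.symm hdu hdv with h | h
  · exact .inl (.inr h.symm)
  · exact .inr (.inr h.symm)

lemma mem_closedNbhd_triangle_of_pawFree (hpaw : HFree paw G) {a b c x d : V}
    (hab : G.Adj a b) (hac : G.Adj a c) (hbc : G.Adj b c)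
    (hx : x ∈ insert a (G.neighborSet a)) (hxd : G.Adj x d) :
    d ∈ insert a (G.neighborSet a) ∪ insert b (G.neighborSet b) ∪
      insert c (G.neighborSet c) := by
  simp only [Set.mem_union]
  obtain rfl | hax := hx
  · exact .inl (.inl (.inr hxd))
  by_cases hxb : x = b
  · subst hxb
    exact .inl (.inr (.inr hxd))
  by_cases hxc : x = c
  · subst hxc
    exact .inr (.inr hxd)
  rcases adj_or_adj_of_pawFree hpaw hab hac hbc (G.adj_symm hax) hxb hxc with hxb | hxc
  · have := mem_closedNbhd_or_mem_closedNbhd_of_pawFree hpaw (G.adj_symm hax) hxb hab hxd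
    tauto
  · have := mem_closedNbhd_or_mem_closedNbhd_of_pawFree hpaw (G.adj_symm hax) hxc hac hxd
    tauto

theorem Connected.finite_of_adj_closed (hconn : G.Connected) {S : Set V} (hfin : S.Finite)
    {v : V} (hv : v ∈ S) (hS : ∀ ⦃x y⦄, x ∈ S → G.Adj x y → y ∈ S) : Finite V := by
  have hmem : ∀ w, w ∈ S := fun w => by
    obtain ⟨p⟩ := hconn.preconnected v w
    induction p with
    | nil => exact hv
    | cons h _ ih => exact ih (hS hv h)
  exact Set.finite_univ_iff.mp (hfin.subset fun w _ => hmem w)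

theorem Connected.finite_of_pawFree (hconn : G.Connected)
    (hlf : ∀ v, (G.neighborSet v).Finite) (hpaw : HFree paw G) {a b c : V}
    (hab : G.Adj a b) (hac : G.Adj a c) (hbc : G.Adj b c) : Finite V := by
  refine hconn.finite_of_adj_closed
    ((((hlf a).insert a).union ((hlf b).insert b)).union ((hlf c).insert c))
    (.inl (.inl (Set.mem_insert a _))) ?_
  rintro x d ((hx | hx) | hx) hxd
  · exact mem_closedNbhd_triangle_of_pawFree hpaw hab hac hbc hx hxd
  · have := mem_closedNbhd_triangle_of_pawFree hpaw hab.symm hbc hac hx hxd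
    simp only [Set.mem_union] at this ⊢
    tauto
  · have := mem_closedNbhd_triangle_of_pawFree hpaw hac.symm hbc.symm hab hx hxd
    simp only [Set.mem_union] at this ⊢
    tauto

lemma eq_or_eq_of_adj_of_clawFree (hclaw : HFree claw G) (h3 : G.CliqueFree 3) {u b c w : V}
    (hub : G.Adj u b) (huc : G.Adj u c) (huw : G.Adj u w) (hbc : b ≠ c) : w = b ∨ w = c := by
  classical
  by_contra! h
  have hind : ∀ {x y}, G.Adj u x → G.Adj u y → ¬G.Adj x y := fun hx hy hxy =>
    h3 {u, _, _} (is3Clique_triple_iff.mpr ⟨hx, hy, hxy⟩)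
  exact hclaw (nonempty_claw_embedding hub huc huw (hind hub huc) (hind hub huw) (hind huc huw)
    hbc (Ne.symm h.1) (Ne.symm h.2))

lemma Walk.IsCycle.mem_support_of_adj_of_clawFree (hclaw : HFree claw G) (h3 : G.CliqueFree 3)
    {a u w : V} {p : G.Walk a a} (hp : p.IsCycle) (hu : u ∈ p.support) (huw : G.Adj u w) :
    w ∈ p.support := by
  classical
  rw [← p.mem_support_rotate_iff u hu]
  set q := p.rotate u hu
  have hq : q.IsCycle := hp.rotate hu
  rcases eq_or_eq_of_adj_of_clawFree hclaw h3 (q.adj_snd hq.not_nil)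
      (q.adj_penultimate hq.not_nil).symm huw hq.snd_ne_penultimate with rfl | rfl
  · exact q.getVert_mem_support 1
  · exact q.getVert_mem_support _

theorem Connected.finite_of_clawFree_of_isCycle (hconn : G.Connected) (hclaw : HFree claw G)
    (h3 : G.CliqueFree 3) {a : V} {p : G.Walk a a} (hp : p.IsCycle) : Finite V :=
  hconn.finite_of_adj_closed p.support.finite_toSet p.start_mem_support
    fun _ _ hx hxy => hp.mem_support_of_adj_of_clawFree hclaw h3 hx hxy

end SimpleGraph

/-- every infinite, locally finite, connected, claw-free graph containing
a cycle contains an induced paw. -/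
theorem stmt_4 {V : Type} [Infinite V] (G : SimpleGraph V)
    (hlf : ∀ v : V, (G.neighborSet v).Finite) (hconn : G.Connected)
    (hclaw : HFree claw G) (hcyc : ∃ (a : V) (p : G.Walk a a), p.IsCycle) :
    Nonempty (paw ↪g G) := by
  classical
  by_contra hpaw
  obtain ⟨_, _, hp⟩ := hcyc
  have : Finite V := by
    by_cases h3 : G.CliqueFree 3
    · exact hconn.finite_of_clawFree_of_isCycle hclaw h3 hp
    · obtain ⟨s, hs⟩ := not_forall_not.mp h3
      obtain ⟨a, b, c, hab, hac, hbc, -⟩ := is3Clique_iff.mp hs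
      exact hconn.finite_of_pawFree hlf hpaw hab hac hbc
  exact not_finite V
end

section
/- There is no infinite, locally finite, 2-connected graph that is both claw-free and paw-free. -/
open SimpleGraph

/-!
A triangle forces a paw-free graph to be dense: every vertex is then reachable from a fixed
triangle vertex `u` in exactly two steps, so a connected, locally finite, paw-free graph with a
triangle is finite. Without triangles, claw-freeness bounds all degrees by `2`; a vertex of degree
`2` lies on a cycle because deleting it leaves the graph connected, and a cycle in a graph of
maximum degree `2` is a whole connected component, hence all of the graph.
-/

section

variable {V : Type*} {G : SimpleGraph V}

namespace SimpleGraph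

lemma adj_or_adj_of_hFree_paw (hpaw : HFree paw G) {a b c d : V}
    (hab : G.Adj a b) (hbc : G.Adj b c) (hbd : G.Adj b d) (hcd : G.Adj c d)
    (hac : a ≠ c) (had : a ≠ d) : G.Adj a c ∨ G.Adj a d := by
  by_contra! h
  have := hab.ne
  have := hbc.ne
  have := hbd.ne
  have := hcd.ne
  refine hpaw ⟨⟨⟨![a, b, c, d], ?_⟩, ?_⟩⟩
  · intro i j hij
    fin_cases i <;> fin_cases j <;> simp_all
  · intro i j
    change G.Adj (![a, b, c, d] i) (![a, b, c, d] j) ↔ paw.Adj i j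
    fin_cases i <;> fin_cases j <;> simp_all [paw, G.adj_comm]

lemma adj_or_adj_or_adj_of_hFree_claw (hclaw : HFree claw G) {c x y z : V}
    (hx : G.Adj c x) (hy : G.Adj c y) (hz : G.Adj c z) (hxy : x ≠ y) (hxz : x ≠ z)
    (hyz : y ≠ z) : G.Adj x y ∨ G.Adj x z ∨ G.Adj y z := by
  by_contra! h
  have := hx.ne
  have := hy.ne
  have := hz.ne
  refine hclaw ⟨⟨⟨![c, x, y, z], ?_⟩, ?_⟩⟩
  · intro i j hij
    fin_cases i <;> fin_cases j <;> simp_all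
  · intro i j
    change G.Adj (![c, x, y, z] i) (![c, x, y, z] j) ↔ claw.Adj i j
    fin_cases i <;> fin_cases j <;> simp_all [claw, G.adj_comm]

lemma Walk.mem_of_adj_closed {S : Set V} (hS : ∀ s ∈ S, ∀ t, G.Adj s t → t ∈ S) :
    ∀ {u v : V}, G.Walk u v → u ∈ S → v ∈ S
  | _, _, .nil, hu => hu
  | _, _, .cons h p, hu => p.mem_of_adj_closed hS (hS _ hu _ h)

lemma Preconnected.finite_of_adj_closed (hG : G.Preconnected) {S : Set V} (hfin : S.Finite)
    (hne : S.Nonempty) (hS : ∀ s ∈ S, ∀ t, G.Adj s t → t ∈ S) : Finite V := by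
  obtain ⟨u, hu⟩ := hne
  have huniv : S = Set.univ :=
    Set.eq_univ_of_forall fun v => (hG u v).elim fun p => p.mem_of_adj_closed hS hu
  exact Set.finite_univ_iff.mp (huniv ▸ hfin)

section Triangle

variable {u p q : V}

lemma exists_common_neighbor_of_hFree_paw (hpaw : HFree paw G) (hup : G.Adj u p)
    (huq : G.Adj u q) (hpq : G.Adj p q) {w : V} (huw : G.Adj u w) : ∃ c, G.Adj u c ∧ G.Adj w c := by
  by_cases hwp : w = p
  · exact ⟨q, huq, hwp ▸ hpq⟩
  by_cases hwq : w = q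
  · exact ⟨p, hup, hwq ▸ hpq.symm⟩
  rcases adj_or_adj_of_hFree_paw hpaw huw.symm hup huq hpq hwp hwq with h | h
  · exact ⟨p, hup, h⟩
  · exact ⟨q, huq, h⟩

lemma exists_adj_adj_of_adj_of_hFree_paw (hpaw : HFree paw G) (hup : G.Adj u p)
    (huq : G.Adj u q) (hpq : G.Adj p q) {s t : V} (hs : ∃ w, G.Adj u w ∧ G.Adj w s)
    (hst : G.Adj s t) : ∃ w, G.Adj u w ∧ G.Adj w t := by
  by_cases hsu : s = u
  · obtain ⟨c, huc, htc⟩ := exists_common_neighbor_of_hFree_paw hpaw hup huq hpq (hsu ▸ hst)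
    exact ⟨c, huc, htc.symm⟩
  by_cases hus : G.Adj u s
  · exact ⟨s, hus, hst⟩
  obtain ⟨w, huw, hws⟩ := hs
  obtain ⟨c, huc, hwc⟩ := exists_common_neighbor_of_hFree_paw hpaw hup huq hpq huw
  -- `s w c` is then a triangle, and `t` is handled by the paw argument around it
  have hsc : G.Adj s c :=
    (adj_or_adj_of_hFree_paw hpaw hws.symm huw.symm hwc huc hsu
      (fun h => hus (h ▸ huc))).resolve_left fun h => hus h.symm
  by_cases htw : G.Adj w t
  · exact ⟨w, huw, htw⟩
  by_cases htc : G.Adj c t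
  · exact ⟨c, huc, htc⟩
  have := adj_or_adj_of_hFree_paw hpaw hst.symm hws.symm hsc hwc
    (fun h => htc (h ▸ hwc.symm)) (fun h => htw (h ▸ hwc))
  rw [G.adj_comm t, G.adj_comm t] at this
  tauto

lemma Preconnected.finite_of_hFree_paw_of_triangle (hG : G.Preconnected) (hpaw : HFree paw G)
    (hup : G.Adj u p) (huq : G.Adj u q) (hpq : G.Adj p q)
    (hlf : ∀ v : V, (G.neighborSet v).Finite) : Finite V :=
  hG.finite_of_adj_closed (S := {t | ∃ w, G.Adj u w ∧ G.Adj w t})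
    (((hlf u).biUnion fun w _ => hlf w).subset fun _ ⟨_, huw, hwt⟩ => Set.mem_biUnion huw hwt)
    ⟨u, p, hup, hup.symm⟩
    fun _ hs _ hst => exists_adj_adj_of_adj_of_hFree_paw hpaw hup huq hpq hs hst

end Triangle

lemma eq_or_eq_or_eq_of_hFree_claw (hclaw : HFree claw G) (htri : G.CliqueFree 3)
    {c x y z : V} (hx : G.Adj c x) (hy : G.Adj c y) (hz : G.Adj c z) : x = y ∨ x = z ∨ y = z := by
  have hind := isIndepSet_neighborSet_of_triangleFree G htri c
  by_contra! h
  obtain ⟨hxy, hxz, hyz⟩ := h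
  rcases adj_or_adj_or_adj_of_hFree_claw hclaw hx hy hz hxy hxz hyz with h | h | h
  exacts [hind hx hy hxy h, hind hx hz hxz h, hind hy hz hyz h]

lemma Preconnected.exists_adj_adj_ne (hG : G.Preconnected) {a b c : V} (hab : a ≠ b)
    (hac : a ≠ c) (hbc : b ≠ c) : ∃ v x y, G.Adj v x ∧ G.Adj v y ∧ x ≠ y := by
  by_contra! h
  have hreach {s t : V} (p : G.Walk s t) : s = t ∨ G.Adj s t := by
    induction p with
    | nil => exact Or.inl rfl
    | cons hsm _ ih =>
      rcases ih with rfl | hmt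
      · exact Or.inr hsm
      · exact Or.inl (h _ _ _ hsm.symm hmt)
  obtain ⟨p⟩ := hG a b
  obtain ⟨p'⟩ := hG a c
  exact hbc (h a b c ((hreach p).resolve_left hab) ((hreach p').resolve_left hac))

lemma exists_isCycle_of_adj_adj {v x y : V} (hv : (G.induce {u | u ≠ v}).Preconnected)
    (hx : G.Adj v x) (hy : G.Adj v y) (hxy : x ≠ y) : ∃ (u : V) (c : G.Walk u u), c.IsCycle := by
  obtain ⟨q, hq⟩ := hv.exists_isPath ⟨x, hx.ne'⟩ ⟨y, hy.ne'⟩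
  let r : G.Walk x y := q.map (Embedding.induce {u | u ≠ v}).toHom
  have hr : r.IsPath := hq.map (Embedding.induce (G := G) _).injective
  have hvr : v ∉ r.support := by
    intro h
    rw [show r.support = _ from Walk.support_map _ q] at h
    obtain ⟨w, -, hw⟩ := List.mem_map.mp h
    exact w.2 hw
  refine ⟨x, .cons hx.symm (.cons hy r.reverse), (Walk.cons_isCycle_iff _ _).mpr ⟨?_, ?_⟩⟩
  · exact (Walk.cons_isPath_iff _ _).mpr ⟨hr.reverse, by simpa using hvr⟩
  · rw [Walk.edges_cons, List.mem_cons, not_or]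
    refine ⟨fun h => ?_, fun h => hvr (by simpa using r.reverse.snd_mem_support_of_mem_edges h)⟩
    rcases Sym2.eq_iff.mp h with ⟨hxv, -⟩ | ⟨hxy', -⟩
    exacts [hx.ne' hxv, hxy hxy']

lemma Walk.IsCycle.mem_support_of_adj
    (hdeg : ∀ {c x y z : V}, G.Adj c x → G.Adj c y → G.Adj c z → x = y ∨ x = z ∨ y = z)
    {u : V} {c : G.Walk u u} (hc : c.IsCycle) {s t : V} (hs : s ∈ c.support)
    (hst : G.Adj s t) : t ∈ c.support := by
  obtain ⟨n₁, n₂, hne, hN⟩ := Set.ncard_eq_two.mp (hc.ncard_neighborSet_toSubgraph_eq_two hs)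
  have hnbr : ∀ n ∈ c.toSubgraph.neighborSet s, G.Adj s n ∧ n ∈ c.support := fun n hn =>
    ⟨c.toSubgraph.adj_sub hn, c.mem_verts_toSubgraph.mp (c.toSubgraph.edge_vert hn.symm)⟩
  obtain ⟨hs₁, hn₁⟩ := hnbr n₁ (by simp [hN])
  obtain ⟨hs₂, hn₂⟩ := hnbr n₂ (by simp [hN])
  rcases hdeg hst hs₁ hs₂ with rfl | rfl | h
  exacts [hn₁, hn₂, absurd h hne]

end SimpleGraph

lemma TwoConnected.finite_of_degree_le_two (h2 : TwoConnected G)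
    (hdeg : ∀ {c x y z : V}, G.Adj c x → G.Adj c y → G.Adj c z → x = y ∨ x = z ∨ y = z) :
    Finite V := by
  obtain ⟨⟨a, b, c, hab, hac, hbc⟩, hconn, hcut⟩ := h2
  obtain ⟨v, x, y, hx, hy, hxy⟩ := hconn.preconnected.exists_adj_adj_ne hab hac hbc
  obtain ⟨u, c, hc⟩ := exists_isCycle_of_adj_adj (hcut v).preconnected hx hy hxy
  exact hconn.preconnected.finite_of_adj_closed c.support.finite_toSet ⟨u, c.start_mem_support⟩
    fun _ hs _ hst => hc.mem_support_of_adj hdeg hs hst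

end

/-- there is no infinite, locally finite, 2-connected graph that is both
claw-free and paw-free. -/
theorem stmt_5 {V : Type} [Infinite V] (G : SimpleGraph V)
    (hlf : ∀ v : V, (G.neighborSet v).Finite) (h2 : TwoConnected G)
    (hclaw : HFree claw G) (hpaw : HFree paw G) : False := by
  suffices Finite V from not_finite V
  by_cases htri : G.CliqueFree 3
  · exact h2.finite_of_degree_le_two fun hx hy hz =>
      eq_or_eq_or_eq_of_hFree_claw hclaw htri hx hy hz
  · classical
    obtain ⟨t, ht⟩ := not_forall.mp htri
    obtain ⟨u, p, q, hup, huq, hpq, -⟩ := is3Clique_iff.mp (not_not.mp ht)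
    exact h2.2.1.preconnected.finite_of_hFree_paw_of_triangle hpaw hup huq hpq hlf
end
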